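/- With the notation of the gradient integrals, let ∇_{p}A = -(α²/(1-α²)) ∫_{θ_min}^{θ_max}(q(θ) - p) dθ with Δθ > 0 and α ∈ (0,1). If the arc centroid C satisfies C ≠ p, then the unit vector u* = -∇_p A/‖∇_p A‖ equals (C - p)/‖C - p‖. That is, the area-minimizing pursuer heading points directly at the centroid of its boundary arc. -/

import Mathlib

/-!
Up to the positive factor `α² / (1 - α²)`, the gradient `∇ₚA` is `-∫ (q - p) = -Δθ • (C - p)`,
so `-∇ₚA` is a positive multiple of `C - p` and the two normalize to the same unit vector.
-/

/-- The unit vector at angle `θ` in the Euclidean plane. -/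
noncomputable def unitVec (θ : ℝ) : EuclideanSpace ℝ (Fin 2) :=
  WithLp.toLp 2 ![Real.cos θ, Real.sin θ]

open NormedSpace

lemma continuous_unitVec : Continuous unitVec := by
  unfold unitVec
  fun_prop

lemma intervalIntegral.integral_sub_const_eq_smul_sub_average {E : Type*}
    [NormedAddCommGroup E] [NormedSpace ℝ E] [CompleteSpace E] {f : ℝ → E} {a b : ℝ} (hab : a ≠ b)
    (hf : IntervalIntegrable f MeasureTheory.volume a b) (p : E) :
    ∫ x in a..b, (f x - p) = (b - a) • ((b - a)⁻¹ • (∫ x in a..b, f x) - p) := by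
  rw [intervalIntegral.integral_sub hf intervalIntegrable_const, intervalIntegral.integral_const,
    smul_sub, smul_smul, mul_inv_cancel₀ (sub_ne_zero.mpr hab.symm), one_smul]

theorem pursuer_optimal_heading_points_at_centroid_general
    (c p : EuclideanSpace ℝ (Fin 2)) (r : ℝ)
    (θmin θmax : ℝ) (h : θmin < θmax) (Δθ : ℝ) (hΔ : Δθ = θmax - θmin)
    (α : ℝ) (hα : α ∈ Set.Ioo (0 : ℝ) 1)
    (q : ℝ → EuclideanSpace ℝ (Fin 2)) (hq : ∀ θ, q θ = c + r • unitVec θ)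
    (C : EuclideanSpace ℝ (Fin 2))
    (hC : C = Δθ⁻¹ • ∫ θ in θmin..θmax, q θ)
    (grad : EuclideanSpace ℝ (Fin 2))
    (hgrad : grad = -((α ^ 2 / (1 - α ^ 2)) • ∫ θ in θmin..θmax, (q θ - p))) :
    -(‖grad‖⁻¹ • grad) = ‖C - p‖⁻¹ • (C - p) := by
  obtain ⟨hα0, hα1⟩ := hα
  have hq_cont : Continuous q := by
    rw [funext hq]
    exact continuous_const.add (continuous_unitVec.const_smul r)
  have hI : ∫ θ in θmin..θmax, (q θ - p) = Δθ • (C - p) := by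
    rw [hC, hΔ]
    exact intervalIntegral.integral_sub_const_eq_smul_sub_average h.ne
      (hq_cont.intervalIntegrable _ _) p
  have hk : 0 < α ^ 2 / (1 - α ^ 2) := div_pos (by positivity) (by nlinarith)
  have hΔ_pos : 0 < Δθ := by linarith
  change -normalize grad = normalize (C - p)
  rw [hgrad, normalize_neg, neg_neg, hI, normalize_smul_of_pos hk, normalize_smul_of_pos hΔ_pos]

theorem pursuer_optimal_heading_points_at_centroid
    (c p : EuclideanSpace ℝ (Fin 2)) (r : ℝ) (hr : 0 < r)
    (θmin θmax : ℝ) (h : θmin < θmax) (Δθ : ℝ) (hΔ : Δθ = θmax - θmin)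
    (α : ℝ) (hα : α ∈ Set.Ioo (0 : ℝ) 1)
    (q : ℝ → EuclideanSpace ℝ (Fin 2)) (hq : ∀ θ, q θ = c + r • unitVec θ)
    (C : EuclideanSpace ℝ (Fin 2))
    (hC : C = Δθ⁻¹ • ∫ θ in θmin..θmax, q θ)
    (grad : EuclideanSpace ℝ (Fin 2))
    (hgrad : grad = -((α ^ 2 / (1 - α ^ 2)) • ∫ θ in θmin..θmax, (q θ - p)))
    (hCp : C ≠ p) :
    -(‖grad‖⁻¹ • grad) = ‖C - p‖⁻¹ • (C - p) :=
  pursuer_optimal_heading_points_at_centroid_general c p r θmin θmax h Δθ hΔ α hα q hq C hC grad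
    hgrad
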